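/- For every integer n ≥ 0, B(n) = (1/(2n+1))·C(3n, n), where C denotes the binomial coefficient. -/
import Mathlib


/-- One step in the random Fibonacci tree; `true` means a right branch:
from the pair `(x, y)`, a right branch leads to `(y, x + y)` and a left
branch leads to `(y, |x - y|)`. -/
def fibStep (p : ℤ × ℤ) (b : Bool) : ℤ × ℤ :=
  if b then (p.2, p.1 + p.2) else (p.2, |p.1 - p.2|)

/-- `fibPairs w i = (g_i, g_{i+1})` for the walk determined by the branch
sequence `w`, where `w j` is the `(j+1)`-st branch choice. -/
def fibPairs (w : ℕ → Bool) : ℕ → ℤ × ℤ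
  | 0 => (1, 1)
  | i + 1 => fibStep (fibPairs w i) (w i)

/-- Extend a branch sequence of length `m` by dummy values. -/
def extendW {m : ℕ} (w : Fin m → Bool) : ℕ → Bool :=
  fun i => if h : i < m then w ⟨i, h⟩ else false

/-- The ending pair `(g_m, g_{m+1})` of the walk determined by a branch
sequence of length `m`. -/
def endPair {m : ℕ} (w : Fin m → Bool) : ℤ × ℤ := fibPairs (extendW w) m

/-- `A(n)`: the number of branch sequences of length `3n` whose walk has
ending pair `(1,1)`. -/
noncomputable def A11 (n : ℕ) : ℕ :=
  Nat.card {w : Fin (3 * n) → Bool // endPair w = (1, 1)}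

/-- `S(n)`: the number of branch sequences of length `3n` whose walk has ending
pair `(1,1)` and no index `1 ≤ i ≤ 3n - 1` with `(g_i, g_{i+1}) = (1,1)`. -/
noncomputable def Sprim (n : ℕ) : ℕ :=
  Nat.card {w : Fin (3 * n) → Bool //
    endPair w = (1, 1) ∧
    ∀ i, 1 ≤ i → i ≤ 3 * n - 1 → fibPairs (extendW w) i ≠ (1, 1)}

/-- `B(n)`: the number of branch sequences of length `3n` whose walk has ending
pair `(1,1)` and satisfies `g_i ≠ 0` for all `0 ≤ i ≤ 3n + 1`. -/
noncomputable def Bnz (n : ℕ) : ℕ :=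
  Nat.card {w : Fin (3 * n) → Bool //
    endPair w = (1, 1) ∧
    ∀ i, i ≤ 3 * n + 1 → (fibPairs (extendW w) i).1 ≠ 0}

/-- `m(a,b)`: `0` if `a, b` both odd, `1` if `a` odd and `b` even,
`2` if `a` even (and `b` odd). -/
def pairOffset (a b : ℕ) : ℕ :=
  if Odd a then (if Odd b then 0 else 1) else 2

/-- `A_{(a,b)}(n)`: the number of branch sequences of length `3n + m(a,b)`
whose walk has ending pair `(a, b)`. -/
noncomputable def Aab (a b : ℕ) (n : ℕ) : ℕ :=
  Nat.card {w : Fin (3 * n + pairOffset a b) → Bool //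
    endPair w = ((a : ℤ), (b : ℤ))}

/-- `SW_{(1,1)}(a,b)`: the least `m` such that some branch sequence of
length `m` has walk with ending pair `(a, b)`. -/
noncomputable def SW (a b : ℕ) : ℕ :=
  sInf {m : ℕ | ∃ w : Fin m → Bool, endPair w = ((a : ℤ), (b : ℤ))}

/- ## Auxiliary development -/


def wstep (b : Bool) : ℤ := if b then 2 else -1

def wsum (w : ℕ → Bool) (m : ℕ) : ℤ := ∑ i ∈ Finset.range m, wstep (w i)

lemma wsum_zero (w : ℕ → Bool) : wsum w 0 = 0 := by simp [wsum]

lemma wsum_succ (w : ℕ → Bool) (m : ℕ) : wsum w (m + 1) = wsum w m + wstep (w m) := by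
  simp [wsum, Finset.sum_range_succ]

lemma wsum_congr {w w' : ℕ → Bool} (m : ℕ) (h : ∀ i < m, w i = w' i) :
    wsum w m = wsum w' m :=
  Finset.sum_congr rfl (fun i hi => by rw [h i (Finset.mem_range.mp hi)])

lemma wsum_add (w : ℕ → Bool) (a b : ℕ) :
    wsum w (a + b) = wsum w a + wsum (fun i => w (a + i)) b := by
  simp [wsum, Finset.sum_range_add]

def mstep (b : Bool) (p : ℤ × ℤ) : ℤ × ℤ := if b then (p.2, p.1 + p.2) else (p.1 + p.2, p.1)

def msig : List Bool → ℤ × ℤ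
  | [] => (1, 1)
  | b :: s => mstep b (msig s)

def mweight : List Bool → ℤ
  | [] => 0
  | b :: s => (if b then 2 else 1) + mweight s

lemma msig_pos (s : List Bool) : 1 ≤ (msig s).1 ∧ 1 ≤ (msig s).2 := by
  induction s with
  | nil => exact ⟨le_refl 1, le_refl 1⟩
  | cons b s ih =>
    cases b <;> simp [msig, mstep] <;> omega

lemma msig_sum_ge (s : List Bool) (h : s ≠ []) : 3 ≤ (msig s).1 + (msig s).2 := by
  cases s with
  | nil => exact absurd rfl h
  | cons b s =>
    have := msig_pos s
    cases b <;> simp [msig, mstep] <;> omega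

lemma mweight_nonneg (s : List Bool) : 0 ≤ mweight s := by
  induction s with
  | nil => exact le_refl 0
  | cons b s ih => cases b <;> simp [mweight] <;> omega

lemma mweight_eq_zero {s : List Bool} (h : mweight s = 0) : s = [] := by
  cases s with
  | nil => rfl
  | cons b s =>
    exfalso
    have := mweight_nonneg s
    cases b <;> simp [mweight] at h <;> omega

def stk (w : ℕ → Bool) : ℕ → List Bool
  | 0 => []
  | k + 1 =>
    if w k then true :: stk w k
    else
      match stk w k with
      | true :: s => false :: s
      | false :: s => s
      | [] => []

lemma invariant (w : ℕ → Bool) (k : ℕ) (h : ∀ j ≤ k, 0 ≤ wsum w j) :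
    fibPairs w k = msig (stk w k) ∧ wsum w k = mweight (stk w k) := by
  induction k with
  | zero => exact ⟨rfl, by simp [wsum_zero, mweight, stk]⟩
  | succ k ih =>
    obtain ⟨hp, hs⟩ := ih (fun j hj => h j (Nat.le_succ_of_le hj))
    rcases hb : w k with _ | _
    · -- w k = false
      rcases hstk : stk w k with _ | ⟨b, s⟩
      · -- empty stack: contradiction with nonneg at k+1
        exfalso
        have h1 := h (k + 1) (le_refl _)
        rw [wsum_succ, hb] at h1
        rw [hstk] at hs
        simp [mweight] at hs
        simp [wstep] at h1
        omega
      · rcases b with _ | _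
        · -- stack = false :: s, pop
          have hpos := msig_pos s
          constructor
          · show fibStep (fibPairs w k) (w k) = _
            rw [hb, hp, hstk]
            simp only [stk, hb, hstk]
            simp only [msig, mstep, fibStep, Bool.false_eq_true, if_false]
            have : |(msig s).1 + (msig s).2 - (msig s).1| = (msig s).2 := by
              rw [abs_of_nonneg] <;> omega
            simp [this]
            rw [abs_of_nonneg (by omega)]
          · rw [wsum_succ, hb, hs, hstk]
            simp only [stk, hb, hstk]
            simp [mweight, wstep]
        · -- stack = true :: s, becomes false :: s
          have hpos := msig_pos s
          constructor
          · show fibStep (fibPairs w k) (w k) = _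
            rw [hb, hp, hstk]
            simp only [stk, hb, hstk]
            simp only [msig, mstep, fibStep, Bool.false_eq_true, if_false, if_true]
            have : |(msig s).2 - ((msig s).1 + (msig s).2)| = (msig s).1 := by
              rw [abs_of_nonpos] <;> omega
            simp [this]
            first | omega | (constructor <;> first | omega | ring)
          · rw [wsum_succ, hb, hs, hstk]
            simp only [stk, hb, hstk]
            simp [mweight, wstep]
            omega
    · -- w k = true
      constructor
      · show fibStep (fibPairs w k) (w k) = _
        rw [hb, hp]
        simp only [stk, hb, if_pos rfl]
        simp [msig, mstep, fibStep]
      · rw [wsum_succ, hb, hs]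
        simp only [stk, hb, if_pos rfl]
        simp [mweight, wstep]
        omega

/-- Forward: nonneg prefix sums imply positive first components. -/
lemma firstComp_pos (w : ℕ → Bool) (k : ℕ) (h : ∀ j ≤ k, 0 ≤ wsum w j) :
    1 ≤ (fibPairs w k).1 ∧ 1 ≤ (fibPairs w k).2 := by
  rw [(invariant w k h).1]; exact msig_pos _

lemma endsAtOne (w : ℕ → Bool) (k : ℕ) (h : ∀ j ≤ k, 0 ≤ wsum w j) (h0 : wsum w k = 0) :
    fibPairs w k = (1, 1) := by
  obtain ⟨hp, hs⟩ := invariant w k h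
  rw [h0] at hs
  rw [hp, mweight_eq_zero hs.symm]
  rfl

/-- `fibPairs` at `k` is `(1,1)` iff ... the key iff for the walk conditions. -/
theorem walk_iff (n : ℕ) (w : Fin (3 * n) → Bool) :
    (endPair w = (1, 1) ∧ ∀ i, i ≤ 3 * n + 1 → (fibPairs (extendW w) i).1 ≠ 0) ↔
    ((∀ k ≤ 3 * n, 0 ≤ wsum (extendW w) k) ∧ wsum (extendW w) (3 * n) = 0) := by
  constructor
  · rintro ⟨hend, hnz⟩
    have hnonneg : ∀ k ≤ 3 * n, 0 ≤ wsum (extendW w) k := by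
      by_contra hcon
      push_neg at hcon
      obtain ⟨k, hk, hneg⟩ := hcon
      -- least such k
      have hex : ∃ k, k ≤ 3 * n ∧ wsum (extendW w) k < 0 := ⟨k, hk, hneg⟩
      classical
      obtain ⟨hk0le, hk0neg⟩ := Nat.find_spec hex
      have hmin : ∀ j < Nat.find hex, ¬(j ≤ 3 * n ∧ wsum (extendW w) j < 0) :=
        fun j hj => Nat.find_min hex hj
      rcases Nat.eq_zero_or_pos (Nat.find hex) with h0 | h0
      · rw [h0, wsum_zero] at hk0neg; omega
      obtain ⟨k1, hke⟩ : ∃ k1, Nat.find hex = k1 + 1 := ⟨Nat.find hex - 1, by omega⟩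
      rw [hke] at hk0le hk0neg
      rw [hke] at hmin
      have hk1 : ∀ j ≤ k1, 0 ≤ wsum (extendW w) j := by
        intro j hj
        by_contra hneg'
        exact (hmin j (by omega)) ⟨by omega, by omega⟩
      rw [wsum_succ] at hk0neg
      have hstep : extendW w k1 = false := by
        rcases hbb : extendW w k1 with _ | _
        · rfl
        · exfalso; have := hk1 k1 (le_refl _); rw [hbb] at hk0neg; simp [wstep] at hk0neg; omega
      have hzero : wsum (extendW w) k1 = 0 := by
        have := hk1 k1 (le_refl _)
        rw [hstep] at hk0neg; simp [wstep] at hk0neg; omega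
      have h11 : fibPairs (extendW w) k1 = (1, 1) := endsAtOne _ _ hk1 hzero
      have h10 : fibPairs (extendW w) (k1 + 1) = (1, 0) := by
        show fibStep (fibPairs (extendW w) k1) (extendW w k1) = _
        rw [h11, hstep]
        simp [fibStep]
      have : (fibPairs (extendW w) (k1 + 2)).1 = 0 := by
        show (fibStep (fibPairs (extendW w) (k1 + 1)) (extendW w (k1 + 1))).1 = 0
        rw [h10]
        cases extendW w (k1 + 1) <;> simp [fibStep]
      exact hnz (k1 + 2) (by omega) this
    refine ⟨hnonneg, ?_⟩
    obtain ⟨hp, hs⟩ := invariant (extendW w) (3 * n) hnonneg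
    rw [hs]
    have : stk (extendW w) (3 * n) = [] := by
      by_contra hne
      have h3 := msig_sum_ge _ hne
      rw [← hp] at h3
      rw [endPair] at hend
      rw [hend] at h3
      norm_num at h3
    rw [this]; rfl
  · rintro ⟨hnonneg, hzero⟩
    refine ⟨endsAtOne _ _ hnonneg hzero, ?_⟩
    intro i hi
    rcases Nat.lt_or_ge i (3 * n + 1) with h | h
    · have := firstComp_pos (extendW w) i (fun j hj => hnonneg j (by omega))
      omega
    · have hieq : i = 3 * n + 1 := by omega
      subst hieq
      have h1 : fibPairs (extendW w) (3 * n) = (1, 1) := endsAtOne _ _ hnonneg hzero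
      have : (fibPairs (extendW w) (3 * n + 1)).1 = 1 := by
        show (fibStep (fibPairs (extendW w) (3 * n)) (extendW w (3 * n))).1 = 1
        rw [h1]
        cases extendW w (3 * n) <;> simp [fibStep]
      omega

/- ## Part 2: counting -/

def cnt {N : ℕ} (w : Fin N → Bool) : ℕ := ∑ j, (if w j then 1 else 0)

lemma wsum_count (u : ℕ → Bool) (m : ℕ) :
    wsum u m = 3 * (∑ i ∈ Finset.range m, (if u i then (1 : ℤ) else 0)) - m := by
  induction m with
  | zero => simp [wsum]
  | succ m ih =>
    rw [wsum_succ, ih, Finset.sum_range_succ]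
    rcases u m with _ | _ <;> simp [wstep] <;> push_cast <;> ring

lemma wsum_extend_total {N : ℕ} (w : Fin N → Bool) :
    wsum (extendW w) N = 3 * (cnt w : ℤ) - N := by
  rw [wsum_count]
  congr 1
  congr 1
  have : (∑ i ∈ Finset.range N, (if extendW w i then (1 : ℤ) else 0)) =
      ∑ j : Fin N, (if w j then (1 : ℤ) else 0) := by
    rw [← Fin.sum_univ_eq_sum_range (fun i => if extendW w i then (1 : ℤ) else 0) N]
    refine Finset.sum_congr rfl (fun j _ => ?_)
    simp [extendW, j.isLt]
  rw [this, cnt]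
  push_cast [apply_ite (Nat.cast : ℕ → ℤ)]
  rfl

/-- Periodic extension of a word of positive length. -/
def pw {M : ℕ} (w : Fin (M + 1) → Bool) : ℕ → Bool :=
  fun i => w ⟨i % (M + 1), Nat.mod_lt _ (Nat.succ_pos M)⟩

lemma extend_eq_pw {M : ℕ} (w : Fin (M + 1) → Bool) (j : ℕ) (h : j < M + 1) :
    extendW w j = pw w j := by
  simp [extendW, pw, h, Nat.mod_eq_of_lt h]

lemma pw_period {M : ℕ} (w : Fin (M + 1) → Bool) (j : ℕ) :
    pw w ((M + 1) + j) = pw w j := by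
  simp [pw, Nat.add_mod_left]

lemma wsum_pw_eq_total {M : ℕ} (w : Fin (M + 1) → Bool) :
    wsum (pw w) (M + 1) = 3 * (cnt w : ℤ) - (M + 1) := by
  have h1 : wsum (pw w) (M + 1) = wsum (extendW w) (M + 1) :=
    wsum_congr _ (fun i hi => (extend_eq_pw w i hi).symm)
  rw [h1, wsum_extend_total]
  push_cast
  ring

lemma S_period {M : ℕ} (w : Fin (M + 1) → Bool) (b : ℕ) :
    wsum (pw w) ((M + 1) + b) = wsum (pw w) (M + 1) + wsum (pw w) b := by
  rw [wsum_add]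
  congr 1
  exact wsum_congr _ (fun i _ => (pw_period w i))

def rot {M : ℕ} (w : Fin (M + 1) → Bool) (i : Fin (M + 1)) : Fin (M + 1) → Bool :=
  fun j => w (i + j)

lemma rot_rot {M : ℕ} (w : Fin (M + 1) → Bool) (a b : Fin (M + 1)) :
    rot (rot w a) b = rot w (a + b) := by
  funext j
  show w (a + (b + j)) = w (a + b + j)
  rw [add_assoc]

lemma rot_zero {M : ℕ} (w : Fin (M + 1) → Bool) : rot w 0 = w := by
  funext j
  show w (0 + j) = w j
  rw [zero_add]

lemma extend_rot {M : ℕ} (w : Fin (M + 1) → Bool) (i : Fin (M + 1)) (j : ℕ) (h : j < M + 1) :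
    extendW (rot w i) j = pw w (i.val + j) := by
  simp only [extendW, dif_pos h, rot, pw]
  congr 1
  try rw [Fin.add_def]

lemma vsum_rot {M : ℕ} (w : Fin (M + 1) → Bool) (i : Fin (M + 1)) (k : ℕ) (hk : k ≤ M + 1) :
    wsum (extendW (rot w i)) k = wsum (pw w) (i.val + k) - wsum (pw w) i.val := by
  rw [wsum_add]
  have : wsum (fun j => pw w (i.val + j)) k = wsum (extendW (rot w i)) k :=
    wsum_congr _ (fun j hj => (extend_rot w i j (lt_of_lt_of_le hj hk)).symm)
  rw [this]
  ring

lemma cnt_rot {M : ℕ} (w : Fin (M + 1) → Bool) (i : Fin (M + 1)) :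
    cnt (rot w i) = cnt w := by
  unfold cnt rot
  exact Fintype.sum_bijective (Equiv.addLeft i) (Equiv.bijective _) _ _ (fun j => rfl)

section GoodIdx

variable {M : ℕ} (w : Fin (M + 1) → Bool)

/-- A good starting index for the rotation. -/
def GoodIdx (i : ℕ) : Prop := ∀ k ≤ M, wsum (pw w) i ≤ wsum (pw w) (i + k)

lemma exists_goodIdx (ht : wsum (pw w) (M + 1) = -1) :
    ∃ i ≤ M, GoodIdx w i := by
  classical
  obtain ⟨i0, hi0M, hmin, hleast⟩ : ∃ i0, i0 ≤ M ∧ (∀ j ≤ M, wsum (pw w) i0 ≤ wsum (pw w) j) ∧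
      ∀ j < i0, ∃ j' ≤ M, wsum (pw w) j' < wsum (pw w) j := by
    have hex : ∃ i, i ≤ M ∧ ∀ j ≤ M, wsum (pw w) i ≤ wsum (pw w) j := by
      obtain ⟨b, hb, hmin⟩ := Finset.exists_min_image (Finset.range (M + 1)) (wsum (pw w))
        ⟨0, Finset.mem_range.mpr (Nat.succ_pos M)⟩
      exact ⟨b, Nat.lt_succ_iff.mp (Finset.mem_range.mp hb), fun j hj =>
        hmin j (Finset.mem_range.mpr (by omega))⟩
    refine ⟨Nat.find hex, (Nat.find_spec hex).1, (Nat.find_spec hex).2, ?_⟩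
    intro j hj
    have hnot := Nat.find_min hex hj
    push_neg at hnot
    have hjM : j ≤ M := le_trans (le_of_lt hj) (Nat.find_spec hex).1
    exact hnot hjM
  refine ⟨i0, hi0M, ?_⟩
  intro k hk
  rcases Nat.lt_or_ge (i0 + k) (M + 1) with hlt | hge
  · exact hmin _ (by omega)
  · have hjlt : i0 + k - (M + 1) < i0 := by omega
    obtain ⟨j', hj', hj'lt⟩ := hleast _ hjlt
    have h2 := hmin j' hj'
    have hsplit : i0 + k = (M + 1) + (i0 + k - (M + 1)) := by omega
    rw [hsplit, S_period, ht]
    omega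

lemma goodIdx_unique_aux (ht : wsum (pw w) (M + 1) = -1) {i j : ℕ}
    (hij : i < j) (hjM : j ≤ M) (gi : GoodIdx w i) (gj : GoodIdx w j) : False := by
  have h1 : wsum (pw w) i ≤ wsum (pw w) j := by
    have := gi (j - i) (by omega)
    rwa [show i + (j - i) = j from by omega] at this
  have h2 : wsum (pw w) j ≤ wsum (pw w) ((M + 1) + i) := by
    have := gj (i + (M + 1) - j) (by omega)
    rwa [show j + (i + (M + 1) - j) = (M + 1) + i from by omega] at this
  rw [S_period, ht] at h2
  omega

lemma goodIdx_unique (ht : wsum (pw w) (M + 1) = -1) {i j : ℕ}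
    (hiM : i ≤ M) (hjM : j ≤ M) (gi : GoodIdx w i) (gj : GoodIdx w j) : i = j := by
  rcases lt_trichotomy i j with h | h | h
  · exact absurd (goodIdx_unique_aux w ht h hjM gi gj) (fun x => x)
  · exact h
  · exact absurd (goodIdx_unique_aux w ht h hiM gj gi) (fun x => x)

end GoodIdx

/- ## Part 2b: the bijection -/

def GProp (n : ℕ) (v : Fin (3 * n + 1) → Bool) : Prop :=
  cnt v = n ∧ ∀ k ≤ 3 * n, 0 ≤ wsum (extendW v) k

def toFinsetEquiv (N k : ℕ) :
    {v : Fin N → Bool // cnt v = k} ≃ {s : Finset (Fin N) // s.card = k} where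
  toFun v := ⟨Finset.univ.filter (fun j => v.1 j = true), by
    rw [Finset.card_filter]
    have := v.2
    unfold cnt at this
    simpa using this⟩
  invFun s := ⟨fun j => decide (j ∈ s.1), by
    unfold cnt
    simp only [decide_eq_true_eq]
    rw [Finset.sum_ite_mem, Finset.univ_inter, ← Finset.card_eq_sum_ones, s.2]⟩
  left_inv := by
    rintro ⟨v, hv⟩
    apply Subtype.ext
    funext j
    simp
  right_inv := by
    rintro ⟨s, hs⟩
    apply Subtype.ext
    ext j
    simp

lemma card_T (n : ℕ) :
    Nat.card {v : Fin (3 * n + 1) → Bool // cnt v = n} = (3 * n + 1).choose n := by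
  rw [Nat.card_congr (toFinsetEquiv (3 * n + 1) n), Nat.card_eq_fintype_card,
    Fintype.card_finset_len, Fintype.card_fin]

def Phi (n : ℕ) (p : {v : Fin (3 * n + 1) → Bool // GProp n v} × Fin (3 * n + 1)) :
    {v : Fin (3 * n + 1) → Bool // cnt v = n} :=
  ⟨rot p.1.1 p.2, by rw [cnt_rot]; exact p.1.2.1⟩

lemma total_of_cnt {n : ℕ} {w : Fin (3 * n + 1) → Bool} (hc : cnt w = n) :
    wsum (pw w) (3 * n + 1) = -1 := by
  rw [wsum_pw_eq_total, hc]
  push_cast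
  ring

lemma goodIdx_of_G {n : ℕ} {w : Fin (3 * n + 1) → Bool} {m : Fin (3 * n + 1)}
    (h : ∀ k ≤ 3 * n, 0 ≤ wsum (extendW (rot w m)) k) : GoodIdx w m.val := by
  intro k hk
  have h2 := h k hk
  rw [vsum_rot w m k (by omega)] at h2
  omega

lemma phi_bij (n : ℕ) : Function.Bijective (Phi n) := by
  constructor
  · rintro ⟨⟨v, hv⟩, i⟩ ⟨⟨v', hv'⟩, i'⟩ h
    simp only [Phi, Subtype.mk.injEq] at h
    have hwc : cnt (rot v i) = n := by rw [cnt_rot]; exact hv.1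
    have ht := total_of_cnt hwc
    have hveq : v = rot (rot v i) (-i) := by
      rw [rot_rot, add_neg_cancel, rot_zero]
    have hveq' : v' = rot (rot v i) (-i') := by
      rw [h, rot_rot, add_neg_cancel, rot_zero]
    have g1 : GoodIdx (rot v i) (-i : Fin (3 * n + 1)).val := by
      apply goodIdx_of_G
      intro k hk
      rw [← hveq]
      exact hv.2 k hk
    have g2 : GoodIdx (rot v i) (-i' : Fin (3 * n + 1)).val := by
      apply goodIdx_of_G
      intro k hk
      rw [← hveq']
      exact hv'.2 k hk
    have hval : (-i : Fin (3 * n + 1)).val = (-i' : Fin (3 * n + 1)).val :=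
      goodIdx_unique (rot v i) ht (by omega) (by omega) g1 g2
    have hii : i = i' := by
      have : (-i : Fin (3 * n + 1)) = -i' := Fin.ext hval
      exact neg_injective this
    have hvv : v = v' := by rw [hveq, hveq', hii]
    simp [hvv, hii]
  · rintro ⟨w, hw⟩
    have ht := total_of_cnt hw
    obtain ⟨i0, hi0M, hgood⟩ := exists_goodIdx w ht
    set m : Fin (3 * n + 1) := ⟨i0, by omega⟩ with hm
    refine ⟨⟨⟨rot w m, ?_, ?_⟩, -m⟩, ?_⟩
    · rw [cnt_rot]; exact hw
    · intro k hk
      rw [vsum_rot w m k (by omega)]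
      have := hgood k hk
      simp only [hm]
      omega
    · apply Subtype.ext
      show rot (rot w m) (-m) = w
      rw [rot_rot, add_neg_cancel, rot_zero]

lemma card_G (n : ℕ) :
    (3 * n + 1).choose n = Nat.card {v : Fin (3 * n + 1) → Bool // GProp n v} * (3 * n + 1) := by
  rw [← card_T n, Nat.card_congr (Equiv.ofBijective _ (phi_bij n)).symm, Nat.card_prod,
    Nat.card_eq_fintype_card (α := Fin (3 * n + 1)), Fintype.card_fin]

/- ## Part 2c: D ≃ G and final assembly -/

lemma cnt_of_wsum_zero {n : ℕ} {w : Fin (3 * n) → Bool}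
    (h : wsum (extendW w) (3 * n) = 0) : cnt w = n := by
  have h2 := wsum_extend_total w
  rw [h] at h2
  omega

lemma g_aux {n : ℕ} {v : Fin (3 * n + 1) → Bool} (hc : cnt v = n)
    (hnn : ∀ k ≤ 3 * n, 0 ≤ wsum (extendW v) k) :
    v (Fin.last (3 * n)) = false ∧ wsum (extendW v) (3 * n) = 0 := by
  have htot : wsum (extendW v) (3 * n + 1) = -1 := by
    rw [wsum_extend_total, hc]; push_cast; ring
  rw [wsum_succ] at htot
  have h0 := hnn (3 * n) le_rfl
  have hlast : extendW v (3 * n) = v (Fin.last (3 * n)) := by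
    simp only [extendW, dif_pos (Nat.lt_succ_self (3 * n))]
    rfl
  rw [hlast] at htot
  rcases hb : v (Fin.last (3 * n)) with _ | _
  · rw [hb] at htot
    simp [wstep] at htot
    exact ⟨rfl, by omega⟩
  · exfalso
    rw [hb] at htot
    simp [wstep] at htot
    omega

lemma ext_snoc {n : ℕ} (w : Fin (3 * n) → Bool) (j : ℕ) (hj : j < 3 * n) :
    extendW (Fin.snoc w false : Fin (3 * n + 1) → Bool) j = extendW w j := by
  simp only [extendW, dif_pos hj, dif_pos (Nat.lt_succ_of_lt hj)]
  have : (⟨j, Nat.lt_succ_of_lt hj⟩ : Fin (3 * n + 1)) = Fin.castSucc ⟨j, hj⟩ := rfl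
  rw [this, Fin.snoc_castSucc]

lemma cnt_snoc {n : ℕ} (w : Fin (3 * n) → Bool) :
    cnt (Fin.snoc w false : Fin (3 * n + 1) → Bool) = cnt w := by
  unfold cnt
  rw [Fin.sum_univ_castSucc]
  simp [Fin.snoc_castSucc, Fin.snoc_last]

lemma ext_castSucc {n : ℕ} (v : Fin (3 * n + 1) → Bool) (j : ℕ) (hj : j < 3 * n) :
    extendW (fun j => v (Fin.castSucc j) : Fin (3 * n) → Bool) j = extendW v j := by
  simp only [extendW, dif_pos hj, dif_pos (Nat.lt_succ_of_lt hj)]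
  rfl

def DGEquiv (n : ℕ) :
    {w : Fin (3 * n) → Bool //
      (∀ k ≤ 3 * n, 0 ≤ wsum (extendW w) k) ∧ wsum (extendW w) (3 * n) = 0} ≃
    {v : Fin (3 * n + 1) → Bool // GProp n v} where
  toFun w := ⟨Fin.snoc w.1 false, by
    obtain ⟨w, hnn, hz⟩ := w
    constructor
    · rw [cnt_snoc, cnt_of_wsum_zero hz]
    · intro k hk
      have he : wsum (extendW (Fin.snoc w false : Fin (3 * n + 1) → Bool)) k
          = wsum (extendW w) k :=
        wsum_congr _ (fun i hi => ext_snoc w i (by omega))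
      rw [he]
      exact hnn k hk⟩
  invFun v := ⟨fun j => v.1 (Fin.castSucc j), by
    obtain ⟨v, hc, hnn⟩ := v
    obtain ⟨hlast, hz⟩ := g_aux hc hnn
    have he : ∀ k ≤ 3 * n, wsum (extendW (fun j => v (Fin.castSucc j) : Fin (3 * n) → Bool)) k
        = wsum (extendW v) k :=
      fun k hk => wsum_congr _ (fun i hi => ext_castSucc v i (by omega))
    exact ⟨fun k hk => (he k hk) ▸ hnn k hk, (he (3 * n) le_rfl) ▸ hz⟩⟩
  left_inv := by
    rintro ⟨w, hw⟩
    apply Subtype.ext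
    funext j
    simp only []
    rw [Fin.snoc_castSucc]
  right_inv := by
    rintro ⟨v, hc, hnn⟩
    obtain ⟨hlast, hz⟩ := g_aux hc hnn
    apply Subtype.ext
    funext j
    refine Fin.lastCases ?_ ?_ j
    · simp only []
      rw [Fin.snoc_last, hlast]
    · intro i
      simp only []
      rw [Fin.snoc_castSucc]

lemma Bnz_eq_cardD (n : ℕ) :
    Bnz n = Nat.card {w : Fin (3 * n) → Bool //
      (∀ k ≤ 3 * n, 0 ≤ wsum (extendW w) k) ∧ wsum (extendW w) (3 * n) = 0} :=
  Nat.card_congr (Equiv.subtypeEquivRight (fun w => walk_iff n w))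

lemma Bnz_count (n : ℕ) : (3 * n + 1).choose n = Bnz n * (3 * n + 1) := by
  rw [Bnz_eq_cardD, Nat.card_congr (DGEquiv n), ← card_G]


/-- For every `n ≥ 0`, `B(n) = (1/(2n+1))·C(3n, n)`. -/
theorem Bnz_formula (n : ℕ) :
    (Bnz n : ℚ) = (1 / (2 * (n : ℚ) + 1)) * Nat.choose (3 * n) n := by
  have key : (3 * n).choose n = Bnz n * (2 * n + 1) := by
    have h1 := Nat.add_one_mul_choose_eq (3 * n) n
    have h2 := Nat.choose_succ_right_eq (3 * n + 1) n
    have h3 := Bnz_count n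
    have h4 : 3 * n + 1 - n = 2 * n + 1 := by omega
    -- (3n+1) * C(3n,n) = C(3n+1,n+1)*(n+1) = C(3n+1,n)*(2n+1) = Bnz*(3n+1)*(2n+1)
    have h5 : (3 * n + 1) * (3 * n).choose n = Bnz n * (3 * n + 1) * (2 * n + 1) := by
      calc (3 * n + 1) * (3 * n).choose n = (3 * n + 1).choose (n + 1) * (n + 1) := h1
        _ = (3 * n + 1).choose n * (2 * n + 1) := by rw [h2, h4]
        _ = Bnz n * (3 * n + 1) * (2 * n + 1) := by rw [h3]
    have h6 : (3 * n + 1) * ((3 * n).choose n) = (3 * n + 1) * (Bnz n * (2 * n + 1)) := by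
      rw [h5]; ring
    exact Nat.eq_of_mul_eq_mul_left (by omega) h6
  have hne : 2 * (n : ℚ) + 1 ≠ 0 := by positivity
  field_simp
  have hq := congrArg (Nat.cast : ℕ → ℚ) key
  push_cast at hq
  linarith
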